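/- arXiv:math-ph/0409011 — 5 statements merged into one kernel-verified Lean document; each statement's English description precedes it below -/
import Mathlib

section
/- For every M > 0, the function β_{M,φ} is monotonically increasing and continuous on (0, ∞), satisfies β_{M,φ}(x) → 0 as x → 0⁺, and satisfies β_{M,φ}(x) ≤ β_{ε,M,φ}(x) for every ε ∈ (0, 1/p₀] and every x > 0. -/
open Set Filter Topology

/-- For every `M > 0`, the function `β_{M,φ}(x) = inf {M^ε x^(1-ε) φ(1/ε) : ε ∈ (0,1/p₀]}`
is monotonically increasing and continuous on `(0, ∞)`, tends to `0` as `x → 0⁺`, and satisfies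
`β_{M,φ}(x) ≤ β_{ε,M,φ}(x)` for every `ε ∈ (0, 1/p₀]` and every `x > 0`. -/
theorem stmt_1 (p₀ : ℝ) (hp₀ : 1 < p₀) (φ : ℝ → ℝ)
    (hφc : ContinuousOn φ (Ici p₀)) (hφpos : ∀ p ≥ p₀, 0 < φ p)
    (M : ℝ) (hM : 0 < M) (β : ℝ → ℝ)
    (hβ : ∀ x, β x = sInf ((fun ε => M ^ ε * x ^ (1 - ε) * φ (1 / ε)) '' Ioc 0 (1 / p₀))) :
    MonotoneOn β (Ioi 0) ∧ ContinuousOn β (Ioi 0) ∧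
    Tendsto β (𝓝[>] 0) (𝓝 0) ∧
    ∀ ε ∈ Ioc 0 (1 / p₀), ∀ x > 0, β x ≤ M ^ ε * x ^ (1 - ε) * φ (1 / ε) := by
  have hp₀pos : (0:ℝ) < p₀ := lt_trans one_pos hp₀
  have hs0 : (0:ℝ) < 1 / p₀ := by positivity
  have hs1 : (1:ℝ) / p₀ < 1 := by
    rw [div_lt_one hp₀pos]; exact hp₀
  set f : ℝ → ℝ → ℝ := fun ε x => M ^ ε * x ^ (1 - ε) * φ (1 / ε) with hf
  have hεfacts : ∀ ε ∈ Ioc 0 (1/p₀), 0 < ε ∧ ε < 1 ∧ p₀ ≤ 1/ε := by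
    rintro ε ⟨hε0, hε1⟩
    refine ⟨hε0, lt_of_le_of_lt hε1 hs1, ?_⟩
    rw [le_div_iff₀ hε0]
    calc p₀ * ε ≤ p₀ * (1/p₀) := by nlinarith
      _ = 1 := by field_simp
  have hfpos : ∀ ε ∈ Ioc 0 (1/p₀), ∀ x : ℝ, 0 < x → 0 < f ε x := by
    intro ε hε x hx
    obtain ⟨h0, h1, h2⟩ := hεfacts ε hε
    exact mul_pos (mul_pos (Real.rpow_pos_of_pos hM _) (Real.rpow_pos_of_pos hx _))
      (hφpos _ h2)
  have hne : ∀ x : ℝ, ((fun ε => M ^ ε * x ^ (1 - ε) * φ (1 / ε)) '' Ioc 0 (1 / p₀)).Nonempty := by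
    intro x
    exact ⟨_, ⟨1/p₀, ⟨hs0, le_refl _⟩, rfl⟩⟩
  have hbdd : ∀ x : ℝ, 0 < x →
      BddBelow ((fun ε => M ^ ε * x ^ (1 - ε) * φ (1 / ε)) '' Ioc 0 (1 / p₀)) := by
    intro x hx
    refine ⟨0, ?_⟩
    rintro b ⟨ε, hε, rfl⟩
    exact (hfpos ε hε x hx).le
  -- part 4
  have hle : ∀ ε ∈ Ioc 0 (1/p₀), ∀ x : ℝ, 0 < x → β x ≤ f ε x := by
    intro ε hε x hx
    rw [hβ x]
    exact csInf_le (hbdd x hx) ⟨ε, hε, rfl⟩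
  have hβnn : ∀ x : ℝ, 0 < x → 0 ≤ β x := by
    intro x hx
    rw [hβ x]
    apply le_csInf (hne x)
    rintro b ⟨ε, hε, rfl⟩
    exact (hfpos ε hε x hx).le
  -- monotone
  have hmono : ∀ x y : ℝ, 0 < x → x ≤ y → β x ≤ β y := by
    intro x y hx hxy
    rw [hβ y]
    apply le_csInf (hne y)
    rintro b ⟨ε, hε, rfl⟩
    refine le_trans (hle ε hε x hx) ?_
    obtain ⟨h0, h1, h2⟩ := hεfacts ε hε
    have : x ^ (1-ε) ≤ y ^ (1-ε) :=
      Real.rpow_le_rpow hx.le hxy (by linarith)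
    have hφp := hφpos _ h2
    simp only [hf]
    gcongr
  -- scaling bound
  have hscale : ∀ x y : ℝ, 0 < x → x ≤ y → β y ≤ (y/x) * β x := by
    intro x y hx hxy
    have hy : 0 < y := lt_of_lt_of_le hx hxy
    have h1 : (x/y) * β y ≤ β x := by
      rw [hβ x]
      apply le_csInf (hne x)
      rintro b ⟨ε, hε, rfl⟩
      obtain ⟨h0, h1, h2⟩ := hεfacts ε hε
      have hfy : f ε y ≤ (y/x) * f ε x := by
        have hyx : y = x * (y/x) := by field_simp
        have hb1 : (1:ℝ) ≤ y/x := (one_le_div hx).mpr hxy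
        have hsplit : y ^ (1-ε) = x ^ (1-ε) * (y/x) ^ (1-ε) := by
          rw [← Real.mul_rpow hx.le (by positivity), mul_div_cancel₀ _ hx.ne']
        have hpow : (y/x) ^ (1-ε) ≤ (y/x) := by
          calc (y/x) ^ (1-ε) ≤ (y/x) ^ (1:ℝ) :=
                Real.rpow_le_rpow_of_exponent_le hb1 (by linarith)
            _ = y/x := Real.rpow_one _
        have hφp := hφpos _ h2
        calc f ε y = M ^ ε * x ^ (1-ε) * φ (1/ε) * (y/x) ^ (1-ε) := by
              simp only [hf]; rw [hsplit]; ring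
          _ ≤ M ^ ε * x ^ (1-ε) * φ (1/ε) * (y/x) := by
              gcongr
          _ = (y/x) * f ε x := by simp only [hf]; ring
      calc (x/y) * β y ≤ (x/y) * f ε y :=
            mul_le_mul_of_nonneg_left (hle ε hε y hy) (by positivity)
        _ ≤ (x/y) * ((y/x) * f ε x) :=
            mul_le_mul_of_nonneg_left hfy (by positivity)
        _ = f ε x := by field_simp
    calc β y = (y/x) * ((x/y) * β y) := by field_simp
      _ ≤ (y/x) * β x := mul_le_mul_of_nonneg_left h1 (by positivity)
  refine ⟨?_, ?_, ?_, fun ε hε x hx => hle ε hε x hx⟩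
  · intro x hx y hy hxy
    exact hmono x y hx hxy
  · -- continuity
    intro x₀ hx₀
    simp only [mem_Ioi] at hx₀
    have hlb : ∀ y ∈ Ioi (0:ℝ), min (β x₀) (y/x₀ * β x₀) ≤ β y := by
      intro y hy
      simp only [mem_Ioi] at hy
      rcases le_total x₀ y with h | h
      · exact le_trans (min_le_left _ _) (hmono x₀ y hx₀ h)
      · refine le_trans (min_le_right _ _) ?_
        have := hscale y x₀ hy h
        calc y/x₀ * β x₀ ≤ y/x₀ * ((x₀/y) * β y) :=
              mul_le_mul_of_nonneg_left this (by positivity)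
          _ = β y := by field_simp
    have hub : ∀ y ∈ Ioi (0:ℝ), β y ≤ max (β x₀) (y/x₀ * β x₀) := by
      intro y hy
      simp only [mem_Ioi] at hy
      rcases le_total x₀ y with h | h
      · exact le_trans (hscale x₀ y hx₀ h) (le_max_right _ _)
      · exact le_trans (hmono y x₀ hy h) (le_max_left _ _)
    have hltend : Tendsto (fun y => min (β x₀) (y/x₀ * β x₀)) (𝓝[Ioi 0] x₀) (𝓝 (β x₀)) := by
      have h : Tendsto (fun y : ℝ => min (β x₀) (y/x₀ * β x₀)) (𝓝 x₀)
          (𝓝 (min (β x₀) (x₀/x₀ * β x₀))) := by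
        apply Tendsto.min tendsto_const_nhds
        exact (tendsto_id.div_const x₀).mul_const _
      rw [div_self hx₀.ne', one_mul, min_self] at h
      exact h.mono_left nhdsWithin_le_nhds
    have hutend : Tendsto (fun y => max (β x₀) (y/x₀ * β x₀)) (𝓝[Ioi 0] x₀) (𝓝 (β x₀)) := by
      have h : Tendsto (fun y : ℝ => max (β x₀) (y/x₀ * β x₀)) (𝓝 x₀)
          (𝓝 (max (β x₀) (x₀/x₀ * β x₀))) := by
        apply Tendsto.max tendsto_const_nhds
        exact (tendsto_id.div_const x₀).mul_const _
      rw [div_self hx₀.ne', one_mul, max_self] at h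
      exact h.mono_left nhdsWithin_le_nhds
    refine tendsto_of_tendsto_of_tendsto_of_le_of_le' hltend hutend ?_ ?_
    · exact eventually_nhdsWithin_of_forall hlb
    · exact eventually_nhdsWithin_of_forall hub
  · -- tendsto to 0
    have hub : ∀ x ∈ Ioi (0:ℝ), β x ≤ M ^ (1/p₀) * x ^ (1 - 1/p₀) * φ (1/(1/p₀)) := by
      intro x hx
      exact hle (1/p₀) ⟨hs0, le_refl _⟩ x hx
    have htend : Tendsto (fun x : ℝ => M ^ (1/p₀) * x ^ (1 - 1/p₀) * φ (1/(1/p₀)))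
        (𝓝[>] (0:ℝ)) (𝓝 0) := by
      have hxp : Tendsto (fun x : ℝ => x ^ (1 - 1/p₀)) (𝓝[>] (0:ℝ)) (𝓝 0) := by
        have h0 : (0:ℝ) < 1 - 1/p₀ := by linarith
        have := (Real.continuousAt_rpow_const 0 (1 - 1/p₀) (Or.inr h0.le)).tendsto
        rw [Real.zero_rpow h0.ne'] at this
        exact this.mono_left nhdsWithin_le_nhds
      have := (hxp.const_mul (M ^ ((1:ℝ)/p₀))).mul_const (φ (1/(1/p₀)))
      simpa using this
    refine tendsto_of_tendsto_of_tendsto_of_le_of_le'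
      (tendsto_const_nhds : Tendsto (fun _ : ℝ => (0:ℝ)) (𝓝[>] 0) (𝓝 0)) htend ?_ ?_
    · exact eventually_nhdsWithin_of_forall (fun x hx => hβnn x hx)
    · exact eventually_nhdsWithin_of_forall hub
end

section
/- For any two constants M₁ > 0 and M₂ > 0, the integral ∫₀¹ ds / β_{M₁,φ}(s) is infinite if and only if the integral ∫₀¹ ds / β_{M₂,φ}(s) is infinite; that is, the admissibility condition is independent of the choice of M. -/
/-!
For `0 < ε ≤ 1/p₀` we have `M₂ ^ ε ≤ max 1 ((M₂ / M₁) ^ (1/p₀)) * M₁ ^ ε`, so `β_{M₁,φ}` and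
`β_{M₂,φ}` agree up to multiplicative constants. The integrands `1 / β_{M,φ}` are then comparable
up to constants as well, and one integral diverges iff the other does.
-/

open Set Filter Topology MeasureTheory

lemma Real.rpow_le_max_one_rpow {x ε a : ℝ} (hx : 0 ≤ x) (hε : ε ∈ Icc 0 a) :
    x ^ ε ≤ max 1 (x ^ a) := by
  rcases le_or_gt x 1 with hx1 | hx1
  · exact (Real.rpow_le_one hx hx1 hε.1).trans (le_max_left _ _)
  · exact (Real.rpow_le_rpow_of_exponent_le hx1.le hε.2).trans (le_max_right _ _)

lemma Real.rpow_le_max_one_div_rpow_mul {M M' ε a : ℝ} (hM : 0 < M) (hM' : 0 ≤ M')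
    (hε : ε ∈ Icc 0 a) : M' ^ ε ≤ max 1 ((M' / M) ^ a) * M ^ ε := by
  calc M' ^ ε = (M' / M) ^ ε * M ^ ε := by
        rw [← Real.mul_rpow (div_nonneg hM' hM.le) hM.le, div_mul_cancel₀ _ hM.ne']
    _ ≤ max 1 ((M' / M) ^ a) * M ^ ε := by
        gcongr
        exact Real.rpow_le_max_one_rpow (div_nonneg hM' hM.le) hε

lemma Real.sInf_image_le_mul_sInf_image {ι : Type*} {S : Set ι} {f g : ι → ℝ} {C : ℝ}
    (hC : 0 < C) (hg : ∀ i ∈ S, 0 ≤ g i) (hgf : ∀ i ∈ S, g i ≤ C * f i) :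
    sInf (g '' S) ≤ C * sInf (f '' S) := by
  rcases S.eq_empty_or_nonempty with rfl | hS
  · simp
  have hbdd : BddBelow (g '' S) := ⟨0, forall_mem_image.2 hg⟩
  rw [← div_le_iff₀' hC]
  refine le_csInf (hS.image f) (forall_mem_image.2 fun i hi => ?_)
  rw [div_le_iff₀' hC]
  exact (csInf_le hbdd (mem_image_of_mem g hi)).trans (hgf i hi)

lemma ENNReal.ofReal_one_div_le_mul {a b C C' : ℝ} (hC' : 0 ≤ C') (hab : a ≤ C' * b)
    (hba : b ≤ C * a) : ENNReal.ofReal (1 / a) ≤ ENNReal.ofReal C * ENNReal.ofReal (1 / b) := by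
  rcases le_or_gt a 0 with ha | ha
  · rw [ENNReal.ofReal_of_nonpos (one_div_nonpos.2 ha)]
    exact zero_le
  have hb : 0 < b := pos_of_mul_pos_right (ha.trans_le hab) hC'
  have hC : 0 ≤ C := nonneg_of_mul_nonneg_left (hb.le.trans hba) ha
  rw [← ENNReal.ofReal_mul hC, mul_one_div]
  apply ENNReal.ofReal_le_ofReal
  rw [div_le_div_iff₀ ha hb]
  linarith

lemma MeasureTheory.lintegral_eq_top_of_le_const_mul {α : Type*} [MeasurableSpace α]
    {μ : Measure α} {f g : α → ENNReal} {c : ENNReal} (hc : c ≠ ⊤)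
    (hfg : ∀ᵐ x ∂μ, f x ≤ c * g x) (hf : ∫⁻ x, f x ∂μ = ⊤) : ∫⁻ x, g x ∂μ = ⊤ := by
  by_contra hg
  have hle := lintegral_mono_ae hfg
  rw [lintegral_const_mul' c g hc, hf, top_le_iff] at hle
  exact ENNReal.mul_ne_top hc hg hle

/-- `β_{M,φ}` in the notation of the paper. -/
noncomputable def betaInf (p₀ : ℝ) (φ : ℝ → ℝ) (M s : ℝ) : ℝ :=
  sInf ((fun ε => M ^ ε * s ^ (1 - ε) * φ (1 / ε)) '' Ioc 0 (1 / p₀))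

lemma betaInf_le_mul_betaInf {p₀ : ℝ} {φ : ℝ → ℝ} (hφ : ∀ p ≥ p₀, 0 ≤ φ p) {M M' s : ℝ}
    (hM : 0 < M) (hM' : 0 ≤ M') (hs : 0 ≤ s) :
    betaInf p₀ φ M' s ≤ max 1 ((M' / M) ^ (1 / p₀)) * betaInf p₀ φ M s := by
  have hφε : ∀ ε ∈ Ioc (0 : ℝ) (1 / p₀), 0 ≤ φ (1 / ε) := fun ε hε =>
    hφ _ ((le_one_div hε.1 (one_div_pos.1 (hε.1.trans_le hε.2))).1 hε.2)
  refine Real.sInf_image_le_mul_sInf_image (one_pos.trans_le (le_max_left _ _))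
    (fun ε hε => by have := hφε ε hε; positivity) fun ε hε => ?_
  have hM'ε := Real.rpow_le_max_one_div_rpow_mul hM hM' ⟨hε.1.le, hε.2⟩
  have := hφε ε hε
  calc M' ^ ε * s ^ (1 - ε) * φ (1 / ε)
      ≤ max 1 ((M' / M) ^ (1 / p₀)) * M ^ ε * s ^ (1 - ε) * φ (1 / ε) := by gcongr
    _ = _ := by ring

lemma lintegral_one_div_betaInf_eq_top_of_eq_top {p₀ : ℝ} {φ : ℝ → ℝ} (hφ : ∀ p ≥ p₀, 0 ≤ φ p)
    {M M' : ℝ} (hM : 0 < M) (hM' : 0 < M')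
    (h : ∫⁻ s in Ioo (0 : ℝ) 1, ENNReal.ofReal (1 / betaInf p₀ φ M s) = ⊤) :
    ∫⁻ s in Ioo (0 : ℝ) 1, ENNReal.ofReal (1 / betaInf p₀ φ M' s) = ⊤ := by
  refine lintegral_eq_top_of_le_const_mul
    (ENNReal.ofReal_ne_top (r := max 1 ((M' / M) ^ (1 / p₀))))
    (ae_restrict_of_forall_mem measurableSet_Ioo fun s hs => ?_) h
  exact ENNReal.ofReal_one_div_le_mul (zero_le_one.trans (le_max_left _ _))
    (betaInf_le_mul_betaInf hφ hM' hM.le hs.1.le) (betaInf_le_mul_betaInf hφ hM hM'.le hs.1.le)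

theorem stmt_2_general (p₀ : ℝ) (φ : ℝ → ℝ)
    (hφpos : ∀ p ≥ p₀, 0 < φ p)
    (M₁ M₂ : ℝ) (hM₁ : 0 < M₁) (hM₂ : 0 < M₂) :
    (∫⁻ s in Ioo (0:ℝ) 1, ENNReal.ofReal
        (1 / sInf ((fun ε => M₁ ^ ε * s ^ (1 - ε) * φ (1 / ε)) '' Ioc 0 (1 / p₀))) = ⊤) ↔
    (∫⁻ s in Ioo (0:ℝ) 1, ENNReal.ofReal
        (1 / sInf ((fun ε => M₂ ^ ε * s ^ (1 - ε) * φ (1 / ε)) '' Ioc 0 (1 / p₀))) = ⊤) :=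
  have hφ : ∀ p ≥ p₀, 0 ≤ φ p := fun p hp => (hφpos p hp).le
  ⟨lintegral_one_div_betaInf_eq_top_of_eq_top hφ hM₁ hM₂,
    lintegral_one_div_betaInf_eq_top_of_eq_top hφ hM₂ hM₁⟩

/-- The admissibility condition `∫₀¹ ds / β_{M,φ}(s) = ∞` is independent of the choice of
`M > 0`: for `M₁, M₂ > 0`, the integral with `M₁` is infinite iff the one with `M₂` is. -/
theorem stmt_2 (p₀ : ℝ) (hp₀ : 1 < p₀) (φ : ℝ → ℝ)
    (hφc : ContinuousOn φ (Ici p₀)) (hφpos : ∀ p ≥ p₀, 0 < φ p)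
    (M₁ M₂ : ℝ) (hM₁ : 0 < M₁) (hM₂ : 0 < M₂) :
    (∫⁻ s in Ioo (0:ℝ) 1, ENNReal.ofReal
        (1 / sInf ((fun ε => M₁ ^ ε * s ^ (1 - ε) * φ (1 / ε)) '' Ioc 0 (1 / p₀))) = ⊤) ↔
    (∫⁻ s in Ioo (0:ℝ) 1, ENNReal.ofReal
        (1 / sInf ((fun ε => M₂ ^ ε * s ^ (1 - ε) * φ (1 / ε)) '' Ioc 0 (1 / p₀))) = ⊤) :=
  stmt_2_general p₀ φ hφpos M₁ M₂ hM₁ hM₂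
end

section
/- (Osgood's lemma, case a = 0.) Let L be a measurable positive function and γ a positive locally integrable function, each defined on [t₀, t₁]. Let μ : [0, ∞) → [0, ∞) be a continuous nondecreasing function with μ(0) = 0 satisfying ∫₀¹ ds / μ(s) = ∞. If L(t) ≤ ∫_{t₀}^t γ(s) μ(L(s)) ds for all t ∈ [t₀, t₁], then L ≡ 0 on [t₀, t₁]. -/
/-! Put `G t = ∫_{t₀}^t γ μ(L)`, so that `L ≤ G` and, `μ` being monotone,
`G y - G x ≤ μ(G y) ∫_x^y γ`. Suppose `G t > 0`. On any interval `[τ, t]` with `G τ > 0` the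
function `∫_{G τ}^{G ·} ds/μ(s) - 2 ∫_τ^· γ` is nonincreasing just to the right of every point,
since `μ ∘ G` cannot double instantaneously; so `∫_{G τ}^{G t} ds/μ(s) ≤ 2 ∫ γ`. As `G τ` takes
every value in `(0, G t]`, `1/μ` would be integrable near `0`, against `∫₀¹ ds/μ(s) = ∞`. -/

open Set Filter Topology MeasureTheory

theorem integrableOn_Ioc_of_integral_le {f : ℝ → ℝ} {a b I : ℝ} (hab : a < b)
    (hfi : ∀ y ∈ Ioo a b, IntegrableOn f (Ioc y b)) (hf : ∀ x ∈ Ioc a b, 0 ≤ f x)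
    (h : ∀ y ∈ Ioo a b, ∫ x in y..b, f x ≤ I) : IntegrableOn f (Ioc a b) := by
  obtain ⟨u, -, hu, hua⟩ := exists_seq_strictAnti_tendsto' hab
  refine integrableOn_Ioc_of_intervalIntegral_norm_bounded_left (I := I) (fun n => hfi _ (hu n)) hua
    (Eventually.of_forall fun n => ?_)
  have hnorm : ∫ x in Ioc (u n) b, ‖f x‖ = ∫ x in u n..b, f x := by
    rw [intervalIntegral.integral_of_le (hu n).2.le]
    refine setIntegral_congr_fun measurableSet_Ioc fun x hx => ?_
    exact Real.norm_of_nonneg (hf x ⟨(hu n).1.trans hx.1, hx.2⟩)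
  exact hnorm ▸ h _ (hu n)

theorem MeasureTheory.IntegrableOn.intervalIntegrable_of_mem_Icc {f : ℝ → ℝ} {a b u v : ℝ}
    (hf : IntegrableOn f (Icc a b)) (hu : u ∈ Icc a b) (hv : v ∈ Icc a b) :
    IntervalIntegrable f volume u v :=
  (hf.mono_set (uIcc_subset_Icc hu hv)).intervalIntegrable

theorem integral_sub_integral_of_mem_Icc {f : ℝ → ℝ} {a b x y : ℝ}
    (hf : IntegrableOn f (Icc a b)) (hx : x ∈ Icc a b) (hy : y ∈ Icc a b) :
    (∫ s in a..y, f s) - ∫ s in a..x, f s = ∫ s in x..y, f s := by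
  have ha : a ∈ Icc a b := left_mem_Icc.2 (hx.1.trans hx.2)
  exact intervalIntegral.integral_interval_sub_left (hf.intervalIntegrable_of_mem_Icc ha hy)
    (hf.intervalIntegrable_of_mem_Icc ha hx)

theorem monotoneOn_primitive_of_nonneg {f : ℝ → ℝ} {a b : ℝ} (hf : IntegrableOn f (Icc a b))
    (hnn : ∀ x ∈ Icc a b, 0 ≤ f x) : MonotoneOn (fun t => ∫ s in a..t, f s) (Icc a b) := by
  intro x hx y hy hxy
  rw [← sub_nonneg, integral_sub_integral_of_mem_Icc hf hx hy]
  exact intervalIntegral.integral_nonneg hxy fun s hs => hnn s ⟨hx.1.trans hs.1, hs.2.trans hy.2⟩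

theorem continuousOn_primitive_of_le {f : ℝ → ℝ} {a b : ℝ} (hab : a ≤ b)
    (hf : IntegrableOn f (Icc a b)) : ContinuousOn (fun t => ∫ s in a..t, f s) (Icc a b) := by
  rw [← uIcc_of_le hab] at hf ⊢
  exact intervalIntegral.continuousOn_primitive_interval hf

theorem integral_mul_comp_le_mul_integral {L γ μ : ℝ → ℝ} {x y M : ℝ} (hxy : x ≤ y)
    (hf : IntervalIntegrable (fun s => γ s * μ (L s)) volume x y)
    (hγ : IntervalIntegrable γ volume x y) (hγnn : ∀ s ∈ Icc x y, 0 ≤ γ s)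
    (hμmono : MonotoneOn μ (Ici 0)) (hLnn : ∀ s ∈ Icc x y, 0 ≤ L s)
    (hLM : ∀ s ∈ Icc x y, L s ≤ M) :
    ∫ s in x..y, γ s * μ (L s) ≤ μ M * ∫ s in x..y, γ s := by
  rw [← intervalIntegral.integral_const_mul]
  refine intervalIntegral.integral_mono_on hxy hf (hγ.const_mul _) fun s hs => ?_
  rw [mul_comm (μ M)]
  exact mul_le_mul_of_nonneg_left
    (hμmono (hLnn s hs) ((hLnn s hs).trans (hLM s hs)) (hLM s hs)) (hγnn s hs)

theorem primitive_sub_le_mul_of_le_primitive {L γ μ : ℝ → ℝ} {a b : ℝ}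
    (hf : IntegrableOn (fun s => γ s * μ (L s)) (Icc a b)) (hγ : IntegrableOn γ (Icc a b))
    (hγnn : ∀ s ∈ Icc a b, 0 ≤ γ s) (hμmono : MonotoneOn μ (Ici 0))
    (hLnn : ∀ s ∈ Icc a b, 0 ≤ L s) (hL : ∀ t ∈ Icc a b, L t ≤ ∫ s in a..t, γ s * μ (L s))
    (hGmono : MonotoneOn (fun t => ∫ s in a..t, γ s * μ (L s)) (Icc a b))
    {x y : ℝ} (hx : x ∈ Icc a b) (hy : y ∈ Icc a b) (hxy : x ≤ y) :
    (∫ s in a..y, γ s * μ (L s)) - ∫ s in a..x, γ s * μ (L s) ≤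
      μ (∫ s in a..y, γ s * μ (L s)) * ((∫ s in a..y, γ s) - ∫ s in a..x, γ s) := by
  have hxy' : Icc x y ⊆ Icc a b := Icc_subset_Icc hx.1 hy.2
  rw [integral_sub_integral_of_mem_Icc hf hx hy, integral_sub_integral_of_mem_Icc hγ hx hy]
  exact integral_mul_comp_le_mul_integral hxy (hf.intervalIntegrable_of_mem_Icc hx hy)
    (hγ.intervalIntegrable_of_mem_Icc hx hy) (fun s hs => hγnn s (hxy' hs)) hμmono
    (fun s hs => hLnn s (hxy' hs)) fun s hs => (hL s (hxy' hs)).trans (hGmono (hxy' hs) hy hs.2)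

section Osgood

variable {μ : ℝ → ℝ}

theorem intervalIntegrable_inv_of_pos (hμc : ContinuousOn μ (Ioi 0))
    (hμpos : ∀ x, 0 < x → 0 < μ x) {x y : ℝ} (hx : 0 < x) (hy : 0 < y) :
    IntervalIntegrable (fun s => (μ s)⁻¹) volume x y := by
  have hsub : uIcc x y ⊆ Ioi 0 := fun s hs => (lt_min hx hy).trans_le hs.1
  exact ((hμc.mono hsub).inv₀ fun s hs => (hμpos s (hsub hs)).ne').intervalIntegrable

theorem integral_inv_le_sub_div (hμc : ContinuousOn μ (Ioi 0)) (hμmono : MonotoneOn μ (Ioi 0))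
    (hμpos : ∀ x, 0 < x → 0 < μ x) {x y : ℝ} (hx : 0 < x) (hxy : x ≤ y) :
    ∫ s in x..y, (μ s)⁻¹ ≤ (y - x) / μ x := by
  have hle : ∀ s ∈ Icc x y, (μ s)⁻¹ ≤ (μ x)⁻¹ := fun s hs =>
    inv_anti₀ (hμpos x hx) (hμmono hx (hx.trans_le hs.1) hs.1)
  calc ∫ s in x..y, (μ s)⁻¹ ≤ ∫ _ in x..y, (μ x)⁻¹ :=
        intervalIntegral.integral_mono_on hxy
          (intervalIntegrable_inv_of_pos hμc hμpos hx (hx.trans_le hxy)) intervalIntegrable_const hle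
    _ = (y - x) / μ x := by simp [div_eq_mul_inv]

theorem not_integrableOn_inv_Ioc (hμc : ContinuousOn μ (Ioi 0)) (hμpos : ∀ x, 0 < x → 0 < μ x)
    (hdiv : ∫⁻ s in Ioo (0:ℝ) 1, ENNReal.ofReal (μ s)⁻¹ = ⊤) {c : ℝ} (hc : 0 < c) :
    ¬ IntegrableOn (fun s => (μ s)⁻¹) (Ioc 0 c) := by
  intro hint
  have hsub : Icc c 1 ⊆ Ioi 0 := fun s hs => hc.trans_le hs.1
  have hIcc : IntegrableOn (fun s => (μ s)⁻¹) (Icc c 1) :=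
    ((hμc.mono hsub).inv₀ fun s hs => (hμpos s (hsub hs)).ne').integrableOn_Icc
  have hIoo : IntegrableOn (fun s => (μ s)⁻¹) (Ioo 0 1) := by
    refine (hint.union hIcc).mono_set fun s hs => ?_
    rcases le_or_gt s c with hsc | hcs
    · exact Or.inl ⟨hs.1, hsc⟩
    · exact Or.inr ⟨hcs.le, hs.2.le⟩
  exact hIoo.lintegral_lt_top.ne hdiv

theorem integral_inv_comp_le_two_mul {G Γ : ℝ → ℝ} {a b : ℝ} (hμc : ContinuousOn μ (Ioi 0))
    (hμmono : MonotoneOn μ (Ioi 0)) (hμpos : ∀ x, 0 < x → 0 < μ x) (hab : a ≤ b)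
    (hG : ContinuousOn G (Icc a b)) (hGmono : MonotoneOn G (Icc a b)) (hGa : 0 < G a)
    (hΓ : ContinuousOn Γ (Icc a b)) (hΓmono : MonotoneOn Γ (Icc a b))
    (hstep : ∀ x ∈ Icc a b, ∀ y ∈ Icc a b, x ≤ y → G y - G x ≤ μ (G y) * (Γ y - Γ x)) :
    ∫ s in G a..G b, (μ s)⁻¹ ≤ 2 * (Γ b - Γ a) := by
  have ha : a ∈ Icc a b := left_mem_Icc.2 hab
  have hGpos : ∀ t ∈ Icc a b, 0 < G t := fun t ht => hGa.trans_le (hGmono ha ht ht.1)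
  set F : ℝ → ℝ := fun t => (∫ s in G a..G t, (μ s)⁻¹) - 2 * Γ t with hF
  have hFc : ContinuousOn F (Icc a b) := by
    have hGab : G a ≤ G b := hGmono ha (right_mem_Icc.2 hab) hab
    have hprim := intervalIntegral.continuousOn_primitive_interval' (a := G a)
      (intervalIntegrable_inv_of_pos hμc hμpos hGa (hGa.trans_le hGab)) left_mem_uIcc
    refine (hprim.comp hG fun t ht => ?_).sub (continuousOn_const.mul hΓ)
    rw [uIcc_of_le hGab]
    exact ⟨hGmono ha ht ht.1, hGmono ht (right_mem_Icc.2 hab) ht.2⟩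
  -- `F` decreases to the right of every point: there `μ ∘ G` has not yet doubled.
  have hFstep : ∀ x ∈ Icc a b, ∀ z ∈ Icc a b, x ≤ z → μ (G z) ≤ 2 * μ (G x) → F z ≤ F x := by
    intro x hx z hz hxz hμz
    have hμx := hμpos _ (hGpos x hx)
    have hGxz : G x ≤ G z := hGmono hx hz hxz
    have hΓxz : 0 ≤ Γ z - Γ x := sub_nonneg.2 (hΓmono hx hz hxz)
    have hsub : (∫ s in G a..G z, (μ s)⁻¹) - ∫ s in G a..G x, (μ s)⁻¹ = ∫ s in G x..G z, (μ s)⁻¹ :=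
      intervalIntegral.integral_interval_sub_left
        (intervalIntegrable_inv_of_pos hμc hμpos hGa (hGpos z hz))
        (intervalIntegrable_inv_of_pos hμc hμpos hGa (hGpos x hx))
    have : ∫ s in G x..G z, (μ s)⁻¹ ≤ 2 * (Γ z - Γ x) :=
      calc ∫ s in G x..G z, (μ s)⁻¹ ≤ (G z - G x) / μ (G x) :=
            integral_inv_le_sub_div hμc hμmono hμpos (hGpos x hx) hGxz
        _ ≤ μ (G z) * (Γ z - Γ x) / μ (G x) := by gcongr; exact hstep x hx z hz hxz
        _ ≤ 2 * μ (G x) * (Γ z - Γ x) / μ (G x) := by gcongr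
        _ = 2 * (Γ z - Γ x) := by field_simp
    simp only [hF]
    linarith
  have hbound : ∀ x ∈ Ico a b, ∀ r, (0 : ℝ) < r → ∃ᶠ z in 𝓝[>] x, slope F x z < r := by
    intro x hx r hr
    have hxI : x ∈ Icc a b := Ico_subset_Icc_self hx
    have hIcc : Icc a b ∈ 𝓝[>] x := Icc_mem_nhdsGT_of_mem hx
    have hμG : ContinuousWithinAt (fun t => μ (G t)) (Ioi x) x :=
      ((hμc.comp hG fun t ht => hGpos t ht) x hxI).mono_of_mem_nhdsWithin hIcc
    have hnear : ∀ᶠ z in 𝓝[>] x, μ (G z) < 2 * μ (G x) :=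
      hμG.eventually_lt_const (by linarith [hμpos _ (hGpos x hxI)])
    refine Eventually.frequently ?_
    filter_upwards [hIcc, hnear, self_mem_nhdsWithin] with z hz hμz hxz
    rw [slope_def_field]
    exact (div_nonpos_of_nonpos_of_nonneg (sub_nonpos.2 (hFstep x hxI z hz (le_of_lt hxz) hμz.le))
      (sub_nonneg.2 (le_of_lt hxz))).trans_lt hr
  have hFab := image_le_of_liminf_slope_right_le_deriv_boundary hFc (B := fun _ => F a)
    (B' := fun _ => 0) le_rfl continuousOn_const (fun _ _ => hasDerivWithinAt_const _ _ _)
    hbound (right_mem_Icc.2 hab)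
  simp only [hF, intervalIntegral.integral_same] at hFab
  linarith

theorem eq_zero_of_sub_le_mul {G Γ : ℝ → ℝ} {a b : ℝ} (hμc : ContinuousOn μ (Ioi 0))
    (hμmono : MonotoneOn μ (Ioi 0)) (hdiv : ∫⁻ s in Ioo (0:ℝ) 1, ENNReal.ofReal (μ s)⁻¹ = ⊤)
    (hab : a ≤ b) (hG : ContinuousOn G (Icc a b)) (hGmono : MonotoneOn G (Icc a b))
    (hGa : G a = 0) (hΓ : ContinuousOn Γ (Icc a b)) (hΓmono : MonotoneOn Γ (Icc a b))
    (hstep : ∀ x ∈ Icc a b, ∀ y ∈ Icc a b, x ≤ y → G y - G x ≤ μ (G y) * (Γ y - Γ x)) :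
    G b = 0 := by
  have ha : a ∈ Icc a b := left_mem_Icc.2 hab
  have hb : b ∈ Icc a b := right_mem_Icc.2 hab
  by_contra hne
  have hGb : 0 < G b := lt_of_le_of_ne (hGa ▸ hGmono ha hb hab) (Ne.symm hne)
  have hval : ∀ y ∈ Ioc 0 (G b), ∃ τ ∈ Icc a b, G τ = y := fun y hy =>
    intermediate_value_Icc hab hG ⟨hGa ▸ hy.1.le, hy.2⟩
  -- Near `a`, `G τ ≤ μ (G τ) * (Γ τ - Γ a)` forces `μ` to be positive at every value of `G`.
  have hμpos : ∀ x, 0 < x → 0 < μ x := by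
    intro x hx
    have hx' : 0 < min x (G b) := lt_min hx hGb
    obtain ⟨τ, hτ, hGτ⟩ := hval _ ⟨hx', min_le_right _ _⟩
    have h := hstep a ha τ hτ hτ.1
    rw [hGa, sub_zero, hGτ] at h
    exact (pos_of_mul_pos_left (hx'.trans_le h) (sub_nonneg.2 (hΓmono ha hτ hτ.1))).trans_le
      (hμmono hx' hx (min_le_left _ _))
  refine not_integrableOn_inv_Ioc hμc hμpos hdiv hGb (integrableOn_Ioc_of_integral_le hGb
    (fun y hy => ?_) (fun x hx => (inv_pos.2 (hμpos x hx.1)).le) (I := 2 * (Γ b - Γ a)) ?_)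
  · exact (intervalIntegrable_inv_of_pos hμc hμpos hy.1 hGb).1
  intro y hy
  obtain ⟨τ, hτ, rfl⟩ := hval y ⟨hy.1, hy.2.le⟩
  have hτb : Icc τ b ⊆ Icc a b := Icc_subset_Icc_left hτ.1
  calc ∫ s in G τ..G b, (μ s)⁻¹ ≤ 2 * (Γ b - Γ τ) :=
        integral_inv_comp_le_two_mul hμc hμmono hμpos hτ.2 (hG.mono hτb) (hGmono.mono hτb) hy.1
          (hΓ.mono hτb) (hΓmono.mono hτb)
          fun x hx y hy hxy => hstep x (hτb hx) y (hτb hy) hxy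
    _ ≤ 2 * (Γ b - Γ a) := by linarith [hΓmono ha hτ hτ.1]

end Osgood

theorem stmt_8_general (t₀ t₁ : ℝ) (L γ μ : ℝ → ℝ)
    (hLnonneg : ∀ t ∈ Icc t₀ t₁, 0 ≤ L t)
    (hγpos : ∀ t ∈ Icc t₀ t₁, 0 < γ t) (hγint : IntegrableOn γ (Icc t₀ t₁))
    (hμc : ContinuousOn μ (Ici 0)) (hμmono : MonotoneOn μ (Ici 0))
    (hμnonneg : ∀ x ≥ (0:ℝ), 0 ≤ μ x)
    (hμdiv : ∫⁻ s in Ioo (0:ℝ) 1, ENNReal.ofReal (1 / μ s) = ⊤)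
    (hL : ∀ t ∈ Icc t₀ t₁, L t ≤ ∫ s in t₀..t, γ s * μ (L s)) :
    ∀ t ∈ Icc t₀ t₁, L t = 0 := by
  intro t ht
  have hsub : Icc t₀ t ⊆ Icc t₀ t₁ := Icc_subset_Icc_right ht.2
  refine le_antisymm ?_ (hLnonneg t ht)
  by_cases hf : IntegrableOn (fun s => γ s * μ (L s)) (Icc t₀ t)
  swap
  · -- Junk value: the integral bounding `L t` is `0`.
    simpa only [intervalIntegral.integral_undef fun h =>
      hf ((intervalIntegrable_iff_integrableOn_Icc_of_le ht.1).1 h)] using hL t ht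
  have hγ : IntegrableOn γ (Icc t₀ t) := hγint.mono_set hsub
  have hγnn : ∀ s ∈ Icc t₀ t, 0 ≤ γ s := fun s hs => (hγpos s (hsub hs)).le
  have hLnn : ∀ s ∈ Icc t₀ t, 0 ≤ L s := fun s hs => hLnonneg s (hsub hs)
  have hGmono := monotoneOn_primitive_of_nonneg hf fun s hs =>
    mul_nonneg (hγnn s hs) (hμnonneg _ (hLnn s hs))
  have hGt : ∫ s in t₀..t, γ s * μ (L s) = 0 :=
    eq_zero_of_sub_le_mul (G := fun t => ∫ s in t₀..t, γ s * μ (L s))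
      (hμc.mono Ioi_subset_Ici_self) (hμmono.mono Ioi_subset_Ici_self)
      (by simpa only [one_div] using hμdiv) ht.1 (continuousOn_primitive_of_le ht.1 hf) hGmono
      intervalIntegral.integral_same (continuousOn_primitive_of_le ht.1 hγ)
      (monotoneOn_primitive_of_nonneg hγ hγnn) fun x hx y hy hxy =>
        primitive_sub_le_mul_of_le_primitive hf hγ hγnn hμmono hLnn
          (fun s hs => hL s (hsub hs)) hGmono hx hy hxy
  exact (hL t ht).trans_eq hGt

/-- Osgood's lemma, case `a = 0`: if `L(t) ≤ ∫_{t₀}^t γ(s) μ(L(s)) ds` on `[t₀, t₁]`, with `L`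
measurable nonnegative, `γ` positive integrable, `μ : [0,∞) → [0,∞)` continuous nondecreasing
with `μ(0) = 0` and `∫₀¹ ds/μ(s) = ∞`, then `L ≡ 0` on `[t₀, t₁]`. -/
theorem stmt_8 (t₀ t₁ : ℝ) (ht : t₀ ≤ t₁) (L γ μ : ℝ → ℝ)
    (hLmeas : Measurable L) (hLnonneg : ∀ t ∈ Icc t₀ t₁, 0 ≤ L t)
    (hγpos : ∀ t ∈ Icc t₀ t₁, 0 < γ t) (hγint : IntegrableOn γ (Icc t₀ t₁))
    (hμc : ContinuousOn μ (Ici 0)) (hμmono : MonotoneOn μ (Ici 0))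
    (hμnonneg : ∀ x ≥ (0:ℝ), 0 ≤ μ x) (hμ0 : μ 0 = 0)
    (hμdiv : ∫⁻ s in Ioo (0:ℝ) 1, ENNReal.ofReal (1 / μ s) = ⊤)
    (hL : ∀ t ∈ Icc t₀ t₁, L t ≤ ∫ s in t₀..t, γ s * μ (L s)) :
    ∀ t ∈ Icc t₀ t₁, L t = 0 :=
  stmt_8_general t₀ t₁ L γ μ hLnonneg hγpos hγint hμc hμmono hμnonneg hμdiv hL
end

section
/- (Yudovich's lemma.) Let D be a measurable subset of ℝⁿ and let f and g be nonnegative measurable functions in L¹(D) ∩ L^∞(D). Let M ≥ ‖f‖_{L^∞(D)}, and assume that for some p₀ > 1 and some positive continuous function φ : [p₀, ∞) → (0, ∞), ‖g‖_{L^p(D)} ≤ φ(p) for all p ≥ p₀. Then ∫_D f(x) g(x) dx ≤ β_{M,φ}(‖f‖_{L¹(D)}). -/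
/-!
Hölder's inequality with the conjugate exponents `q = 1/(1-ε)` and `p = 1/ε` bounds
`∫_D f g` by `‖f‖_q ‖g‖_p ≤ ‖f‖_q φ(1/ε)`. Since `0 ≤ f ≤ M`, one has `f ^ q ≤ M ^ (q-1) f`,
whence `‖f‖_q ≤ M^ε ‖f‖₁^(1-ε)`. Every admissible `ε` thus gives an upper bound, and so does
the infimum over them.
-/

open Set Filter Topology MeasureTheory

open scoped ENNReal

namespace MeasureTheory

variable {α : Type*} [MeasurableSpace α] {μ : Measure α}

theorem eLpNorm_le_eLpNorm_top_rpow_mul_eLpNorm_one_rpow {E : Type*} [NormedAddCommGroup E]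
    {f : α → E} (hf : AEStronglyMeasurable f μ) {p : ℝ} (hp : 1 ≤ p) :
    eLpNorm f (ENNReal.ofReal p) μ ≤ eLpNorm f ⊤ μ ^ (1 - p⁻¹) * eLpNorm f 1 μ ^ p⁻¹ := by
  have hp0 : 0 < p := by linarith
  set C := eLpNorm f ⊤ μ
  have hpointwise : ∀ᵐ x ∂μ, ‖f x‖ₑ ^ p ≤ C ^ (p - 1) * ‖f x‖ₑ := by
    filter_upwards [ae_le_eLpNormEssSup (f := f) (μ := μ)] with x hx
    rw [← eLpNorm_exponent_top] at hx
    calc ‖f x‖ₑ ^ p = ‖f x‖ₑ ^ (p - 1) * ‖f x‖ₑ ^ (1 : ℝ) := by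
          rw [← ENNReal.rpow_add_of_nonneg _ _ (by linarith) zero_le_one, sub_add_cancel]
      _ ≤ C ^ (p - 1) * ‖f x‖ₑ := by
          rw [ENNReal.rpow_one]
          gcongr
  have hlintegral : ∫⁻ x, ‖f x‖ₑ ^ p ∂μ ≤ C ^ (p - 1) * eLpNorm f 1 μ := by
    rw [eLpNorm_one_eq_lintegral_enorm, ← lintegral_const_mul'' _ hf.enorm]
    exact lintegral_mono_ae hpointwise
  rw [eLpNorm_eq_lintegral_rpow_enorm_toReal (by simpa using hp0) ENNReal.ofReal_ne_top,
    ENNReal.toReal_ofReal hp0.le, one_div]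
  calc (∫⁻ x, ‖f x‖ₑ ^ p ∂μ) ^ p⁻¹ ≤ (C ^ (p - 1) * eLpNorm f 1 μ) ^ p⁻¹ := by gcongr
    _ = C ^ (1 - p⁻¹) * eLpNorm f 1 μ ^ p⁻¹ := by
        rw [ENNReal.mul_rpow_of_nonneg _ _ (by positivity), ← ENNReal.rpow_mul]
        congr 2
        field_simp

theorem Integrable.memLp_of_memLp_top {E : Type*} [NormedAddCommGroup E] {f : α → E}
    (hf : Integrable f μ) (hf_top : MemLp f ⊤ μ) {p : ℝ} (hp : 1 ≤ p) :
    MemLp f (ENNReal.ofReal p) μ := by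
  have h_one : eLpNorm f 1 μ < ∞ := (memLp_one_iff_integrable.2 hf).eLpNorm_lt_top
  have h_top : eLpNorm f ⊤ μ < ∞ := hf_top.eLpNorm_lt_top
  refine ⟨hf.aestronglyMeasurable, ?_⟩
  calc eLpNorm f (ENNReal.ofReal p) μ ≤ eLpNorm f ⊤ μ ^ (1 - p⁻¹) * eLpNorm f 1 μ ^ p⁻¹ :=
        eLpNorm_le_eLpNorm_top_rpow_mul_eLpNorm_one_rpow hf.aestronglyMeasurable hp
    _ < ∞ := by
        have : p⁻¹ ≤ 1 := inv_le_one_of_one_le₀ hp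
        have h1 := ENNReal.rpow_lt_top_of_nonneg (sub_nonneg.2 this) h_top.ne
        have h2 := ENNReal.rpow_lt_top_of_nonneg (inv_nonneg.2 (zero_le_one.trans hp)) h_one.ne
        exact ENNReal.mul_lt_top h1 h2

theorem integral_mul_le_toReal_eLpNorm_mul_toReal_eLpNorm {p q : ℝ≥0∞} [p.HolderConjugate q]
    {f g : α → ℝ} (hf : MemLp f p μ) (hg : MemLp g q μ) :
    ∫ x, f x * g x ∂μ ≤ (eLpNorm f p μ).toReal * (eLpNorm g q μ).toReal := by
  have hholder : eLpNorm (f * g) 1 μ ≤ eLpNorm f p μ * eLpNorm g q μ := by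
    simpa only [smul_eq_mul] using eLpNorm_smul_le_mul_eLpNorm (r := 1) hg.1 hf.1
  rw [← ENNReal.toReal_mul]
  calc ∫ x, f x * g x ∂μ ≤ ‖∫ x, f x * g x ∂μ‖ := Real.le_norm_self _
    _ = ‖∫ x, f x * g x ∂μ‖ₑ.toReal := (toReal_enorm _).symm
    _ ≤ (eLpNorm (f * g) 1 μ).toReal := by
        refine ENNReal.toReal_mono (hholder.trans_lt ?_).ne ?_
        · exact ENNReal.mul_lt_top hf.eLpNorm_lt_top hg.eLpNorm_lt_top
        · rw [eLpNorm_one_eq_lintegral_enorm]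
          exact enorm_integral_le_lintegral_enorm _
    _ ≤ (eLpNorm f p μ * eLpNorm g q μ).toReal :=
        ENNReal.toReal_mono (ENNReal.mul_ne_top hf.eLpNorm_ne_top hg.eLpNorm_ne_top) hholder

theorem integral_eq_toReal_eLpNorm_one_of_nonneg {f : α → ℝ} (hf : AEStronglyMeasurable f μ)
    (hf_nonneg : 0 ≤ᵐ[μ] f) : ∫ x, f x ∂μ = (eLpNorm f 1 μ).toReal := by
  rw [eLpNorm_one_eq_lintegral_enorm, ← integral_norm_eq_lintegral_enorm hf]
  exact integral_congr_ae (hf_nonneg.mono fun x hx => (Real.norm_of_nonneg hx).symm)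

theorem toReal_eLpNorm_le_rpow_mul_integral_rpow {f : α → ℝ} (hf : Integrable f μ)
    (hf_top : MemLp f ⊤ μ) (hf_nonneg : 0 ≤ᵐ[μ] f) {M : ℝ} (hM : (eLpNorm f ⊤ μ).toReal ≤ M)
    {p : ℝ} (hp : 1 ≤ p) :
    (eLpNorm f (ENNReal.ofReal p) μ).toReal ≤ M ^ (1 - p⁻¹) * (∫ x, f x ∂μ) ^ p⁻¹ := by
  have hp_inv : 0 ≤ p⁻¹ := inv_nonneg.2 (zero_le_one.trans hp)
  have hp_inv_le : p⁻¹ ≤ 1 := inv_le_one_of_one_le₀ hp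
  have h_ne_top : eLpNorm f ⊤ μ ^ (1 - p⁻¹) * eLpNorm f 1 μ ^ p⁻¹ ≠ ∞ :=
    ENNReal.mul_ne_top (ENNReal.rpow_ne_top_of_nonneg (by linarith) hf_top.eLpNorm_ne_top)
      (ENNReal.rpow_ne_top_of_nonneg hp_inv (memLp_one_iff_integrable.2 hf).eLpNorm_ne_top)
  rw [integral_eq_toReal_eLpNorm_one_of_nonneg hf.aestronglyMeasurable hf_nonneg]
  calc (eLpNorm f (ENNReal.ofReal p) μ).toReal
      ≤ (eLpNorm f ⊤ μ ^ (1 - p⁻¹) * eLpNorm f 1 μ ^ p⁻¹).toReal :=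
        ENNReal.toReal_mono h_ne_top
          (eLpNorm_le_eLpNorm_top_rpow_mul_eLpNorm_one_rpow hf.aestronglyMeasurable hp)
    _ = (eLpNorm f ⊤ μ).toReal ^ (1 - p⁻¹) * (eLpNorm f 1 μ).toReal ^ p⁻¹ := by
        rw [ENNReal.toReal_mul, ← ENNReal.toReal_rpow, ← ENNReal.toReal_rpow]
    _ ≤ M ^ (1 - p⁻¹) * (eLpNorm f 1 μ).toReal ^ p⁻¹ := by gcongr

end MeasureTheory

theorem stmt_10_general (n : ℕ) (D : Set (Fin n → ℝ)) (hD : MeasurableSet D)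
    (f g : (Fin n → ℝ) → ℝ)
    (hfnn : ∀ x ∈ D, 0 ≤ f x)
    (hf1 : IntegrableOn f D) (hfinf : MemLp f ⊤ (volume.restrict D))
    (hg1 : IntegrableOn g D) (hginf : MemLp g ⊤ (volume.restrict D))
    (M : ℝ) (hM : (eLpNorm f ⊤ (volume.restrict D)).toReal ≤ M)
    (p₀ : ℝ) (hp₀ : 1 < p₀) (φ : ℝ → ℝ)
    (hgp : ∀ p ≥ p₀, (eLpNorm g (ENNReal.ofReal p) (volume.restrict D)).toReal ≤ φ p) :
    ∫ x in D, f x * g x ≤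
      sInf ((fun ε => M ^ ε * (∫ x in D, f x) ^ (1 - ε) * φ (1 / ε)) '' Ioc 0 (1 / p₀)) := by
  have hp₀_pos : 0 < p₀ := by linarith
  refine le_csInf ((nonempty_Ioc.2 (by positivity)).image _) ?_
  rintro _ ⟨ε, ⟨hε_pos, hε_le⟩, rfl⟩
  have hp₀_le : p₀ ≤ 1 / ε := by rwa [le_one_div hp₀_pos hε_pos]
  have hε_lt : ε < 1 := hε_le.trans_lt ((div_lt_one hp₀_pos).2 hp₀)
  have hq : 1 ≤ (1 - ε)⁻¹ := (one_le_inv₀ (by linarith)).2 (by linarith)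
  have : (ENNReal.ofReal (1 - ε)⁻¹).HolderConjugate (ENNReal.ofReal (1 / ε)) := by
    rw [ENNReal.holderConjugate_iff, ← ENNReal.ofReal_inv_of_pos (by positivity),
      ← ENNReal.ofReal_inv_of_pos (by positivity), inv_inv, one_div, inv_inv,
      ← ENNReal.ofReal_add (by linarith) hε_pos.le, sub_add_cancel, ENNReal.ofReal_one]
  have hf_Lq : (eLpNorm f (ENNReal.ofReal (1 - ε)⁻¹) (volume.restrict D)).toReal ≤
      M ^ ε * (∫ x in D, f x) ^ (1 - ε) := by
    simpa only [inv_inv, sub_sub_cancel] using toReal_eLpNorm_le_rpow_mul_integral_rpow hf1 hfinf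
      (ae_restrict_of_forall_mem hD hfnn) hM hq
  calc ∫ x in D, f x * g x
      ≤ (eLpNorm f (ENNReal.ofReal (1 - ε)⁻¹) (volume.restrict D)).toReal *
          (eLpNorm g (ENNReal.ofReal (1 / ε)) (volume.restrict D)).toReal :=
        integral_mul_le_toReal_eLpNorm_mul_toReal_eLpNorm (hf1.memLp_of_memLp_top hfinf hq)
          (hg1.memLp_of_memLp_top hginf (by linarith))
    _ ≤ M ^ ε * (∫ x in D, f x) ^ (1 - ε) * φ (1 / ε) :=
        mul_le_mul hf_Lq (hgp _ hp₀_le) ENNReal.toReal_nonneg (ENNReal.toReal_nonneg.trans hf_Lq)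

/-- Yudovich's lemma: for `D ⊆ ℝⁿ` measurable, `f, g ≥ 0` measurable in `L¹(D) ∩ L^∞(D)`,
`M ≥ ‖f‖_{L^∞(D)}`, and `‖g‖_{L^p(D)} ≤ φ(p)` for all `p ≥ p₀` (`p₀ > 1`, `φ` positive
continuous), one has `∫_D f g ≤ β_{M,φ}(‖f‖_{L¹(D)})`, where
`β_{M,φ}(x) = inf {M^ε x^(1-ε) φ(1/ε) : ε ∈ (0, 1/p₀]}`. -/
theorem stmt_10 (n : ℕ) (D : Set (Fin n → ℝ)) (hD : MeasurableSet D)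
    (f g : (Fin n → ℝ) → ℝ) (hf : Measurable f) (hg : Measurable g)
    (hfnn : ∀ x ∈ D, 0 ≤ f x) (hgnn : ∀ x ∈ D, 0 ≤ g x)
    (hf1 : IntegrableOn f D) (hfinf : MemLp f ⊤ (volume.restrict D))
    (hg1 : IntegrableOn g D) (hginf : MemLp g ⊤ (volume.restrict D))
    (M : ℝ) (hM : (eLpNorm f ⊤ (volume.restrict D)).toReal ≤ M)
    (p₀ : ℝ) (hp₀ : 1 < p₀) (φ : ℝ → ℝ)
    (hφc : ContinuousOn φ (Ici p₀)) (hφpos : ∀ p ≥ p₀, 0 < φ p)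
    (hgp : ∀ p ≥ p₀, (eLpNorm g (ENNReal.ofReal p) (volume.restrict D)).toReal ≤ φ p) :
    ∫ x in D, f x * g x ≤
      sInf ((fun ε => M ^ ε * (∫ x in D, f x) ^ (1 - ε) * φ (1 / ε)) '' Ioc 0 (1 / p₀)) :=
  stmt_10_general n D hD f g hfnn hf1 hfinf hg1 hginf M hM p₀ hp₀ φ hgp
end

section
/- Let θ be an admissible function, φ(p) = p θ(p), M > 0, and write β = β_{M,φ}. Fix T > 0. Then: (i) ∫₁^∞ ds / β(s) = ∞, so for every x > 0 there exists a unique f(x) > x with ∫_x^{f(x)} ds / β(s) = T; (ii) the function f is monotonically increasing on (0, ∞); and (iii) f(x) → 0 as x → 0⁺. -/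
/-! Write `g = 1/β` and `G y = ∫₁^y g`, so that `∫_x^y g = G y - G x`. Admissibility forces
`β > 0` (a zero of `β` would spread to all of `(0, ∞)`, as `β` is monotone and
`β y ≤ (y/x) β x` for `x ≤ y`), hence `g` is positive and antitone and `G` is strictly
increasing on `(0, ∞)`. The choice `ε = 1/p₀` gives `g(s) ≥ c s^{1/p₀ - 1}`, which is not
integrable at `∞`, so `G` is unbounded above; admissibility says that `G` is unbounded below
near `0⁺`. A rate function is exactly a solution of `G (f x) = G x + T`: it exists by the
intermediate value theorem, is unique and monotone because `G` is strictly increasing, and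
`G (f x) → -∞` forces `f x → 0`. -/

open Set Filter Topology MeasureTheory

/-- `β_{M,φ}` for `φ(p) = p θ(p)`. -/
noncomputable def beta (p₀ M : ℝ) (θ : ℝ → ℝ) (x : ℝ) : ℝ :=
  sInf ((fun ε => M ^ ε * x ^ (1 - ε) * ((1 / ε) * θ (1 / ε))) '' Set.Ioc 0 (1 / p₀))

section Beta

variable {p₀ M : ℝ} {θ : ℝ → ℝ}

theorem beta_weight_pos (hθpos : ∀ p ≥ p₀, 0 < θ p) {ε : ℝ} (hε : ε ∈ Ioc 0 (1 / p₀)) :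
    0 < (1 / ε) * θ (1 / ε) := by
  have hp : p₀ ≤ 1 / ε := by simpa using one_div_le_one_div_of_le hε.1 hε.2
  have := hθpos _ hp
  have := hε.1
  positivity

theorem beta_term_pos (hM : 0 < M) (hθpos : ∀ p ≥ p₀, 0 < θ p) {x ε : ℝ} (hx : 0 < x)
    (hε : ε ∈ Ioc 0 (1 / p₀)) : 0 < M ^ ε * x ^ (1 - ε) * ((1 / ε) * θ (1 / ε)) := by
  have := beta_weight_pos hθpos hε
  positivity

theorem beta_nonneg (hM : 0 < M) (hθpos : ∀ p ≥ p₀, 0 < θ p) {x : ℝ} (hx : 0 < x) :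
    0 ≤ beta p₀ M θ x :=
  Real.sInf_nonneg <| by
    rintro _ ⟨ε, hε, rfl⟩
    exact (beta_term_pos hM hθpos hx hε).le

theorem beta_le_term (hM : 0 < M) (hθpos : ∀ p ≥ p₀, 0 < θ p) {x ε : ℝ} (hx : 0 < x)
    (hε : ε ∈ Ioc 0 (1 / p₀)) :
    beta p₀ M θ x ≤ M ^ ε * x ^ (1 - ε) * ((1 / ε) * θ (1 / ε)) :=
  csInf_le ⟨0, by rintro _ ⟨ε, hε, rfl⟩; exact (beta_term_pos hM hθpos hx hε).le⟩
    (mem_image_of_mem _ hε)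

theorem monotoneOn_beta (hp₀ : 1 < p₀) (hM : 0 < M) (hθpos : ∀ p ≥ p₀, 0 < θ p) :
    MonotoneOn (beta p₀ M θ) (Ioi 0) := by
  intro x (hx : 0 < x) y (hy : 0 < y) hxy
  refine le_csInf ((nonempty_Ioc.2 (by positivity)).image _) ?_
  rintro _ ⟨ε, hε, rfl⟩
  have hε1 : ε ≤ 1 := hε.2.trans (div_le_one_of_le₀ hp₀.le (by positivity))
  refine (beta_le_term hM hθpos hx hε).trans ?_
  have := beta_weight_pos hθpos hε
  dsimp only
  gcongr

theorem beta_le_div_mul (hp₀ : 1 < p₀) (hM : 0 < M) (hθpos : ∀ p ≥ p₀, 0 < θ p) {x y : ℝ}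
    (hx : 0 < x) (hxy : x ≤ y) : beta p₀ M θ y ≤ y / x * beta p₀ M θ x := by
  have hy : 0 < y := hx.trans_le hxy
  have hyx : 1 ≤ y / x := (one_le_div hx).2 hxy
  rw [← div_le_iff₀' (by positivity)]
  refine le_csInf ((nonempty_Ioc.2 (by positivity)).image _) ?_
  rintro _ ⟨ε, hε, rfl⟩
  have hrpow : y ^ (1 - ε) ≤ y / x * x ^ (1 - ε) :=
    calc y ^ (1 - ε) = (y / x) ^ (1 - ε) * x ^ (1 - ε) := by
          rw [← Real.mul_rpow (by positivity) hx.le, div_mul_cancel₀ _ hx.ne']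
      _ ≤ (y / x) ^ (1 : ℝ) * x ^ (1 - ε) := by
          gcongr
          linarith [hε.1]
      _ = y / x * x ^ (1 - ε) := by rw [Real.rpow_one]
  have := beta_weight_pos hθpos hε
  rw [div_le_iff₀' (by positivity)]
  calc beta p₀ M θ y ≤ M ^ ε * y ^ (1 - ε) * ((1 / ε) * θ (1 / ε)) :=
        beta_le_term hM hθpos hy hε
    _ ≤ M ^ ε * (y / x * x ^ (1 - ε)) * ((1 / ε) * θ (1 / ε)) := by gcongr
    _ = y / x * (M ^ ε * x ^ (1 - ε) * ((1 / ε) * θ (1 / ε))) := by ring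

theorem beta_pos (hp₀ : 1 < p₀) (hM : 0 < M) (hθpos : ∀ p ≥ p₀, 0 < θ p)
    (hadm : ∫⁻ s in Ioo (0:ℝ) 1, ENNReal.ofReal (1 / beta p₀ M θ s) = ⊤) {x : ℝ} (hx : 0 < x) :
    0 < beta p₀ M θ x := by
  by_contra! hle
  have hzero : ∀ s > 0, beta p₀ M θ s = 0 := fun s hs => by
    refine le_antisymm ?_ (beta_nonneg hM hθpos hs)
    rcases le_total s x with hsx | hxs
    · exact (monotoneOn_beta hp₀ hM hθpos hs hx hsx).trans hle
    · exact (beta_le_div_mul hp₀ hM hθpos hx hxs).trans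
        (mul_nonpos_of_nonneg_of_nonpos (by positivity) hle)
  -- then `1 / β` is the junk value `1 / 0 = 0` on all of `(0, 1)`
  rw [setLIntegral_congr_fun measurableSet_Ioo fun s hs => by
    rw [hzero s hs.1, div_zero, ENNReal.ofReal_zero]] at hadm
  simp at hadm

theorem inv_mul_rpow_le_one_div_beta (hp₀ : 1 < p₀) (hM : 0 < M) (hθpos : ∀ p ≥ p₀, 0 < θ p)
    {s : ℝ} (hs : 0 < s) (hβ : 0 < beta p₀ M θ s) :
    (M ^ (1 / p₀) * (p₀ * θ p₀))⁻¹ * s ^ (1 / p₀ - 1) ≤ 1 / beta p₀ M θ s := by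
  have hb := beta_le_term hM hθpos hs (ε := 1 / p₀) ⟨by positivity, le_rfl⟩
  rw [one_div_one_div] at hb
  calc (M ^ (1 / p₀) * (p₀ * θ p₀))⁻¹ * s ^ (1 / p₀ - 1)
      = 1 / (M ^ (1 / p₀) * s ^ (1 - 1 / p₀) * (p₀ * θ p₀)) := by
        rw [show 1 / p₀ - 1 = -(1 - 1 / p₀) by ring, Real.rpow_neg hs.le]
        field_simp
    _ ≤ 1 / beta p₀ M θ s := one_div_le_one_div_of_le hβ hb

end Beta

section RateFunction

variable {g : ℝ → ℝ}

theorem lintegral_Ioi_one_eq_top_of_rpow_le {r c : ℝ} (hr : -1 ≤ r) (hc : 0 < c)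
    (hlb : ∀ s > 1, c * s ^ r ≤ g s) : ∫⁻ s in Ioi (1:ℝ), ENNReal.ofReal (g s) = ⊤ := by
  have hpow_nonneg : ∀ s ∈ Ioi (1:ℝ), 0 ≤ c * s ^ r := fun s (hs : 1 < s) => by
    have := one_pos.trans hs
    positivity
  have hpow : ∫⁻ s in Ioi (1:ℝ), ENNReal.ofReal (c * s ^ r) = ⊤ := by
    by_contra hfin
    have hint : IntegrableOn (fun s : ℝ => c * s ^ r) (Ioi 1) :=
      (lintegral_ofReal_ne_top_iff_integrable
        ((continuousOn_const.mul (continuousOn_id.rpow_const fun s (hs : 1 < s) =>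
          Or.inl (one_pos.trans hs).ne')).aestronglyMeasurable measurableSet_Ioi)
        ((ae_restrict_iff' measurableSet_Ioi).2 (ae_of_all _ hpow_nonneg))).1 hfin
    have : IntegrableOn (fun s : ℝ => s ^ r) (Ioi 1) := by
      simpa only [IntegrableOn, ← mul_assoc, inv_mul_cancel₀ hc.ne', one_mul] using
        hint.const_mul c⁻¹
    linarith [(integrableOn_Ioi_rpow_iff one_pos).1 this]
  refine eq_top_mono (setLIntegral_mono' measurableSet_Ioi fun s hs => ?_) hpow
  exact ENNReal.ofReal_le_ofReal (hlb s hs)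

theorem MeasureTheory.LocallyIntegrableOn.intervalIntegrable_of_pos
    (hg : LocallyIntegrableOn g (Ioi 0)) {a b : ℝ} (ha : 0 < a) (hb : 0 < b) :
    IntervalIntegrable g volume a b :=
  (hg.integrableOn_compact_subset (fun _ hs => (lt_min ha hb).trans_le hs.1)
    isCompact_uIcc).intervalIntegrable

theorem integral_eq_sub_integral_one (hg : LocallyIntegrableOn g (Ioi 0)) {x y : ℝ}
    (hx : 0 < x) (hy : 0 < y) :
    ∫ s in x..y, g s = (∫ s in (1:ℝ)..y, g s) - ∫ s in (1:ℝ)..x, g s :=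
  (intervalIntegral.integral_interval_sub_left (hg.intervalIntegrable_of_pos one_pos hy)
    (hg.intervalIntegrable_of_pos one_pos hx)).symm

theorem strictMonoOn_integral_one (hg : LocallyIntegrableOn g (Ioi 0))
    (hg_pos : ∀ s > 0, 0 < g s) : StrictMonoOn (fun y => ∫ s in (1:ℝ)..y, g s) (Ioi 0) := by
  intro x hx y hy hxy
  have hpos : 0 < ∫ s in x..y, g s :=
    intervalIntegral.intervalIntegral_pos_of_pos_on (hg.intervalIntegrable_of_pos hx hy)
      (fun s hs => hg_pos s (lt_trans hx hs.1)) hxy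
  rw [integral_eq_sub_integral_one hg hx hy] at hpos
  simpa [sub_pos] using hpos

theorem exists_lt_integral_one_of_lintegral_Ioi_eq_top (hg : LocallyIntegrableOn g (Ioi 0))
    (hg_nonneg : ∀ s > 0, 0 ≤ g s) (htop : ∫⁻ s in Ioi (1:ℝ), ENNReal.ofReal (g s) = ⊤)
    (B : ℝ) : ∃ y, 1 ≤ y ∧ B < ∫ s in (1:ℝ)..y, g s := by
  by_contra! hB
  have hint : IntegrableOn g (Ioi 1) := by
    refine integrableOn_Ioi_of_intervalIntegral_norm_bounded B 1 (l := atTop)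
      (b := fun n : ℕ => (n : ℝ) + 1) (fun n => ?_) ?_ (Eventually.of_forall fun n => ?_)
    · exact (hg.intervalIntegrable_of_pos one_pos (by positivity)).1
    · exact tendsto_atTop_add_const_right _ 1 tendsto_natCast_atTop_atTop
    · have h1 : (1:ℝ) ≤ n + 1 := by simp
      rw [intervalIntegral.integral_congr fun s hs =>
        Real.norm_of_nonneg (hg_nonneg s (one_pos.trans_le (by simpa [h1] using hs.1)))]
      exact hB _ h1
  exact hint.lintegral_lt_top.ne htop

theorem exists_lt_integral_to_one_of_lintegral_Ioo_eq_top (hg : LocallyIntegrableOn g (Ioi 0))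
    (hg_nonneg : ∀ s > 0, 0 ≤ g s) (htop : ∫⁻ s in Ioo (0:ℝ) 1, ENNReal.ofReal (g s) = ⊤)
    (B : ℝ) : ∃ x, 0 < x ∧ x ≤ 1 ∧ B < ∫ s in x..1, g s := by
  by_contra! hB
  have ha_pos (n : ℕ) : 0 < 1 / ((n : ℝ) + 1) := by positivity
  have ha_le (n : ℕ) : 1 / ((n : ℝ) + 1) ≤ 1 := by
    rw [div_le_one (by positivity)]
    simp
  have hint : IntegrableOn g (Ioc 0 1) := by
    refine integrableOn_Ioc_of_intervalIntegral_norm_bounded_left (I := B) (l := atTop)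
      (fun n => (hg.intervalIntegrable_of_pos (ha_pos n) one_pos).1)
      tendsto_one_div_add_atTop_nhds_zero_nat (Eventually.of_forall fun n => ?_)
    rw [setIntegral_congr_fun measurableSet_Ioc fun s hs =>
      Real.norm_of_nonneg (hg_nonneg s ((ha_pos n).trans hs.1)),
      ← intervalIntegral.integral_of_le (ha_le n)]
    exact hB _ (ha_pos n) (ha_le n)
  exact ((lintegral_mono_set Ioo_subset_Ioc_self).trans_lt hint.lintegral_lt_top).ne htop

theorem existsUnique_integral_eq (hg : LocallyIntegrableOn g (Ioi 0))
    (hg_pos : ∀ s > 0, 0 < g s) (htop : ∫⁻ s in Ioi (1:ℝ), ENNReal.ofReal (g s) = ⊤)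
    {T : ℝ} (hT : 0 < T) {x : ℝ} (hx : 0 < x) :
    ∃! y : ℝ, x < y ∧ ∫ s in x..y, g s = T := by
  have hmono := strictMonoOn_integral_one hg hg_pos
  obtain ⟨Y, hY1, hYT⟩ := exists_lt_integral_one_of_lintegral_Ioi_eq_top hg
    (fun s hs => (hg_pos s hs).le) htop ((∫ s in (1:ℝ)..x, g s) + T)
  have hY : 0 < Y := one_pos.trans_le hY1
  have hTY : T < ∫ s in x..Y, g s := by
    rw [integral_eq_sub_integral_one hg hx hY]
    linarith
  have hxY : x < Y := by
    by_contra! hYx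
    have : ∫ s in (1:ℝ)..Y, g s ≤ ∫ s in (1:ℝ)..x, g s := hmono.monotoneOn hY hx hYx
    linarith
  have hcont : ContinuousOn (fun y => ∫ s in x..y, g s) (Icc x Y) := by
    simpa [uIcc_of_le hxY.le] using intervalIntegral.continuousOn_primitive_interval'
      (hg.intervalIntegrable_of_pos hx hY) left_mem_uIcc
  obtain ⟨y, hy, hyT : ∫ s in x..y, g s = T⟩ := intermediate_value_Icc hxY.le hcont
    ⟨by simpa using hT.le, hTY.le⟩
  have hxy : x < y := hy.1.lt_of_ne (by rintro rfl; simp [hT.ne] at hyT)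
  refine ⟨y, ⟨hxy, hyT⟩, fun z ⟨hxz, hzT⟩ => hmono.injOn (hx.trans hxz) (hx.trans hxy) ?_⟩
  have h := hzT.trans hyT.symm
  rw [integral_eq_sub_integral_one hg hx (hx.trans hxz),
    integral_eq_sub_integral_one hg hx (hx.trans hxy)] at h
  simpa using h

theorem integral_one_eq_add_of_integral_eq (hg : LocallyIntegrableOn g (Ioi 0)) {F : ℝ → ℝ}
    {T x : ℝ} (hx : 0 < x) (hF : x < F x ∧ ∫ s in x..F x, g s = T) :
    ∫ s in (1:ℝ)..F x, g s = (∫ s in (1:ℝ)..x, g s) + T := by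
  rw [← hF.2, integral_eq_sub_integral_one hg hx (hx.trans hF.1)]
  ring

theorem monotoneOn_of_integral_eq (hg : LocallyIntegrableOn g (Ioi 0))
    (hg_pos : ∀ s > 0, 0 < g s) {F : ℝ → ℝ} {T : ℝ}
    (hF : ∀ x > 0, x < F x ∧ ∫ s in x..F x, g s = T) : MonotoneOn F (Ioi 0) := by
  intro x (hx : 0 < x) y (hy : 0 < y) hxy
  have hmono := strictMonoOn_integral_one hg hg_pos
  rw [← hmono.le_iff_le (hx.trans (hF x hx).1) (hy.trans (hF y hy).1),
    integral_one_eq_add_of_integral_eq hg hx (hF x hx),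
    integral_one_eq_add_of_integral_eq hg hy (hF y hy), add_le_add_iff_right]
  exact hmono.monotoneOn hx hy hxy

theorem tendsto_nhdsGT_zero_of_integral_eq (hg : LocallyIntegrableOn g (Ioi 0))
    (hg_pos : ∀ s > 0, 0 < g s) (htop : ∫⁻ s in Ioo (0:ℝ) 1, ENNReal.ofReal (g s) = ⊤)
    {F : ℝ → ℝ} {T : ℝ} (hF : ∀ x > 0, x < F x ∧ ∫ s in x..F x, g s = T) :
    Tendsto F (𝓝[>] 0) (𝓝 0) := by
  have hmono := strictMonoOn_integral_one hg hg_pos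
  refine tendsto_order.2 ⟨fun a ha => ?_, fun a ha => ?_⟩
  · filter_upwards [self_mem_nhdsWithin] with x (hx : 0 < x)
    exact ha.trans (hx.trans (hF x hx).1)
  · obtain ⟨x₀, hx₀, -, hx₀B⟩ := exists_lt_integral_to_one_of_lintegral_Ioo_eq_top hg
      (fun s hs => (hg_pos s hs).le) htop (T - ∫ s in (1:ℝ)..a, g s)
    filter_upwards [Ioo_mem_nhdsGT hx₀] with x hx
    have hx₀a : (∫ s in (1:ℝ)..x₀, g s) + T < ∫ s in (1:ℝ)..a, g s := by
      rw [intervalIntegral.integral_symm 1 x₀] at hx₀B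
      linarith
    rw [← hmono.lt_iff_lt (hx.1.trans (hF x hx.1).1) ha,
      integral_one_eq_add_of_integral_eq hg hx.1 (hF x hx.1)]
    linarith [hmono hx.1 hx₀ hx.2]

end RateFunction

theorem stmt_14_general (p₀ : ℝ) (hp₀ : 1 < p₀) (θ : ℝ → ℝ)
    (hθpos : ∀ p ≥ p₀, 0 < θ p)
    (hadm : ∀ M' > 0,
      ∫⁻ s in Ioo (0:ℝ) 1, ENNReal.ofReal (1 / beta p₀ M' θ s) = ⊤)
    (M : ℝ) (hM : 0 < M) (T : ℝ) (hT : 0 < T) :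
    (∫⁻ s in Ioi (1:ℝ), ENNReal.ofReal (1 / beta p₀ M θ s) = ⊤) ∧
    (∀ x > 0, ∃! y : ℝ, x < y ∧ (∫ s in x..y, 1 / beta p₀ M θ s) = T) ∧
    (∀ F : ℝ → ℝ,
      (∀ x > 0, x < F x ∧ (∫ s in x..(F x), 1 / beta p₀ M θ s) = T) →
      MonotoneOn F (Ioi 0) ∧ Tendsto F (𝓝[>] 0) (𝓝 0)) := by
  have hβ : ∀ x > 0, 0 < beta p₀ M θ x := fun x hx => beta_pos hp₀ hM hθpos (hadm M hM) hx
  have hg_pos : ∀ s > 0, 0 < 1 / beta p₀ M θ s := fun s hs => one_div_pos.2 (hβ s hs)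
  have hg_anti : AntitoneOn (fun s => 1 / beta p₀ M θ s) (Ioi 0) := fun x hx y hy hxy =>
    one_div_le_one_div_of_le (hβ x hx) (monotoneOn_beta hp₀ hM hθpos hx hy hxy)
  have hg : LocallyIntegrableOn (fun s => 1 / beta p₀ M θ s) (Ioi 0) :=
    (locallyIntegrableOn_iff isOpen_Ioi.isLocallyClosed).2 fun k hk hkc =>
      (hg_anti.mono hk).integrableOn_isCompact hkc
  have hinf : ∫⁻ s in Ioi (1:ℝ), ENNReal.ofReal (1 / beta p₀ M θ s) = ⊤ :=
    lintegral_Ioi_one_eq_top_of_rpow_le (by linarith [one_div_pos.2 (zero_lt_one.trans hp₀)])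
      (by have := hθpos p₀ le_rfl; positivity) fun s hs =>
        inv_mul_rpow_le_one_div_beta hp₀ hM hθpos (zero_lt_one.trans hs)
          (hβ s (zero_lt_one.trans hs))
  exact ⟨hinf, fun x hx => existsUnique_integral_eq hg hg_pos hinf hT hx, fun F hF =>
    ⟨monotoneOn_of_integral_eq hg hg_pos hF,
      tendsto_nhdsGT_zero_of_integral_eq hg hg_pos (hadm M hM) hF⟩⟩

/-- For `θ` admissible, `φ(p) = p θ(p)`, `M > 0`, `β = β_{M,φ}` and `T > 0`:
(i) `∫₁^∞ ds/β(s) = ∞`, so for every `x > 0` there is a unique `f(x) > x` with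
`∫_x^{f(x)} ds/β(s) = T`; (ii) any such rate function `f` is monotonically increasing on
`(0, ∞)`; and (iii) `f(x) → 0` as `x → 0⁺`. -/
theorem stmt_14 (p₀ : ℝ) (hp₀ : 1 < p₀) (θ : ℝ → ℝ)
    (hθc : ContinuousOn θ (Ici p₀)) (hθpos : ∀ p ≥ p₀, 0 < θ p)
    (hadm : ∀ M' > 0,
      ∫⁻ s in Ioo (0:ℝ) 1, ENNReal.ofReal (1 / beta p₀ M' θ s) = ⊤)
    (M : ℝ) (hM : 0 < M) (T : ℝ) (hT : 0 < T) :
    (∫⁻ s in Ioi (1:ℝ), ENNReal.ofReal (1 / beta p₀ M θ s) = ⊤) ∧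
    (∀ x > 0, ∃! y : ℝ, x < y ∧ (∫ s in x..y, 1 / beta p₀ M θ s) = T) ∧
    (∀ F : ℝ → ℝ,
      (∀ x > 0, x < F x ∧ (∫ s in x..(F x), 1 / beta p₀ M θ s) = T) →
      MonotoneOn F (Ioi 0) ∧ Tendsto F (𝓝[>] 0) (𝓝 0)) :=
  stmt_14_general p₀ hp₀ θ hθpos hadm M hM T hT
end
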